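/- The collection { [2n] \ S : S ⊆ [2n] is colored blue by c₀ } of complements of the blue sets of the coloring c₀ is restrictive; that is, it is pair-enforcing, miss-forbidding, not-too-high and flip-susceptible. -/
import Mathlib


open Finset BigOperators

/-- The ground set `[m] = {1, ..., m}`. -/
def ground (m : ℕ) : Finset ℕ := Finset.Icc 1 m

/-- `f` is a poset embedding of `2^[n]` into `2^[m]`: it maps subsets of `[n]`
to subsets of `[m]`, is injective, and satisfies `S ⊆ T ↔ f S ⊆ f T`. -/
def IsEmbedding (n m : ℕ) (f : Finset ℕ → Finset ℕ) : Prop :=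
  (∀ S, S ⊆ ground n → f S ⊆ ground m) ∧
  (∀ S T, S ⊆ ground n → T ⊆ ground n → (S ⊆ T ↔ f S ⊆ f T)) ∧
  (∀ S T, S ⊆ ground n → T ⊆ ground n → f S = f T → S = T)

/-- `Q` is a copy of `2^[n]` in `2^[m]`: the image of the powerset of `[n]`
under some poset embedding. -/
def IsCopy (n m : ℕ) (Q : Finset (Finset ℕ)) : Prop :=
  ∃ f, IsEmbedding n m f ∧ Q = (ground n).powerset.image f

/-- The `k`-th pair `{2k-1, 2k}` is contained in `S`. -/
def PairIn (k : ℕ) (S : Finset ℕ) : Prop := 2*k - 1 ∈ S ∧ 2*k ∈ S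

/-- `S` has a pair: it contains both elements of some pair. -/
def HasPair (n : ℕ) (S : Finset ℕ) : Prop := ∃ k ∈ Finset.Icc 1 n, PairIn k S

/-- `S` misses a pair: it contains neither element of some pair. -/
def MissesPair (n : ℕ) (S : Finset ℕ) : Prop :=
  ∃ k ∈ Finset.Icc 1 n, 2*k - 1 ∉ S ∧ 2*k ∉ S

/-- The partner of `x`: the other element of the pair containing `x`. -/
def partner (x : ℕ) : ℕ := if x % 2 = 0 then x - 1 else x + 1

/-- `x` is a single in `S`: `x ∈ S` but its partner is not in `S`. -/
def IsSingleIn (x : ℕ) (S : Finset ℕ) : Prop := x ∈ S ∧ partner x ∉ S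

/-- The indices of the pairs fully contained in `S`. -/
def pairIndices (n : ℕ) (S : Finset ℕ) : Finset ℕ :=
  (Finset.Icc 1 n).filter (fun k => 2*k - 1 ∈ S ∧ 2*k ∈ S)

/-- The set of singles of `S`. -/
def singles (S : Finset ℕ) : Finset ℕ := S.filter (fun x => partner x ∉ S)

/-- Every `S ∈ R` with `⌈n/2⌉ ≤ |S| < n` has a pair. -/
def PairEnforcing (n : ℕ) (R : Set (Finset ℕ)) : Prop :=
  ∀ S ∈ R, (n + 1) / 2 ≤ S.card → S.card < n → HasPair n S

/-- Every `S ∈ R` with `n < |S| ≤ n + ⌊n/2⌋` misses no pair. -/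
def MissForbidding (n : ℕ) (R : Set (Finset ℕ)) : Prop :=
  ∀ S ∈ R, n < S.card → S.card ≤ n + n / 2 → ¬ MissesPair n S

/-- Every `S ∈ R` has `|S| ≤ n + ⌊n/2⌋`. -/
def NotTooHigh (n : ℕ) (R : Set (Finset ℕ)) : Prop :=
  ∀ S ∈ R, S.card ≤ n + n / 2

/-- Whenever `S₁, S₂ ⊆ [2n]` have size `n`, `|S₁ ∪ S₂| = n + 1` and neither has
a pair, at most one of them is in `R`. -/
def FlipSusceptible (n : ℕ) (R : Set (Finset ℕ)) : Prop :=
  ∀ S₁ S₂ : Finset ℕ, S₁ ⊆ ground (2*n) → S₂ ⊆ ground (2*n) →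
    S₁.card = n → S₂.card = n → (S₁ ∪ S₂).card = n + 1 →
    ¬ HasPair n S₁ → ¬ HasPair n S₂ → ¬ (S₁ ∈ R ∧ S₂ ∈ R)

/-- `R` is restrictive: pair-enforcing, miss-forbidding, not-too-high and
flip-susceptible. -/
def Restrictive (n : ℕ) (R : Set (Finset ℕ)) : Prop :=
  PairEnforcing n R ∧ MissForbidding n R ∧ NotTooHigh n R ∧ FlipSusceptible n R

/-- The coloring `c₀`: `S` is red according to the five-case rule. -/
def isRed (n : ℕ) (S : Finset ℕ) : Prop :=
  if S.card < (n + 1) / 2 then True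
  else if S.card < n then HasPair n S
  else if S.card = n then Odd (∑ x ∈ S, x)
  else if S.card ≤ n + n / 2 then ¬ MissesPair n S
  else False

lemma mem_ground' {m x : ℕ} : x ∈ ground m ↔ 1 ≤ x ∧ x ≤ m := by
  simp [ground]

lemma card_ground (m : ℕ) : (ground m).card = m := by simp [ground]

lemma card_compl' {n : ℕ} {S : Finset ℕ} (h : S ⊆ ground n) :
    (ground n \ S).card = n - S.card := by
  rw [Finset.card_sdiff_of_subset h, card_ground]

lemma hasPair_compl {n : ℕ} {S : Finset ℕ} :
    HasPair n (ground (2*n) \ S) ↔ MissesPair n S := by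
  simp only [HasPair, PairIn, MissesPair, Finset.mem_sdiff, mem_ground', Finset.mem_Icc]
  constructor
  · rintro ⟨k, hk, ⟨_, h1⟩, ⟨_, h2⟩⟩
    exact ⟨k, hk, h1, h2⟩
  · rintro ⟨k, hk, h1, h2⟩
    exact ⟨k, hk, ⟨by omega, h1⟩, ⟨by omega, h2⟩⟩

lemma missesPair_compl {n : ℕ} {S : Finset ℕ} (h : S ⊆ ground (2*n)) :
    MissesPair n (ground (2*n) \ S) ↔ HasPair n S := by
  simp only [HasPair, PairIn, MissesPair, Finset.mem_sdiff, mem_ground', Finset.mem_Icc]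
  constructor
  · rintro ⟨k, hk, h1, h2⟩
    refine ⟨k, hk, ?_, ?_⟩
    · by_contra h'; exact h1 ⟨⟨by omega, by omega⟩, h'⟩
    · by_contra h'; exact h2 ⟨⟨by omega, by omega⟩, h'⟩
  · rintro ⟨k, hk, h1, h2⟩
    exact ⟨k, hk, fun h' => h'.2 h1, fun h' => h'.2 h2⟩

lemma pair_of_same_idx {n : ℕ} {S : Finset ℕ} (hsub : S ⊆ ground (2*n)) {x y : ℕ}
    (hx : x ∈ S) (hy : y ∈ S) (hxy : x ≠ y) (h : (x+1)/2 = (y+1)/2) : HasPair n S := by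
  have hx' := mem_ground'.mp (hsub hx)
  have hy' := mem_ground'.mp (hsub hy)
  refine ⟨(x+1)/2, Finset.mem_Icc.mpr (by omega), ?_, ?_⟩
  · have : 2*((x+1)/2) - 1 = x ∨ 2*((x+1)/2) - 1 = y := by omega
    rcases this with h' | h' <;> rw [h'] <;> assumption
  · have : 2*((x+1)/2) = x ∨ 2*((x+1)/2) = y := by omega
    rcases this with h' | h' <;> rw [h'] <;> assumption

lemma one_per_pair {n : ℕ} {S : Finset ℕ} (hsub : S ⊆ ground (2*n))
    (hcard : S.card = n) (hnp : ¬ HasPair n S) :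
    S.image (fun x => (x+1)/2) = Finset.Icc 1 n := by
  apply Finset.eq_of_subset_of_card_le
  · intro k hk
    simp only [Finset.mem_image] at hk
    obtain ⟨x, hx, rfl⟩ := hk
    have := mem_ground'.mp (hsub hx)
    exact Finset.mem_Icc.mpr (by omega)
  · have hinj : Set.InjOn (fun x => (x+1)/2) S := by
      intro x hx y hy h
      by_contra hxy
      exact hnp (pair_of_same_idx hsub hx hy hxy h)
    rw [Nat.card_Icc, Finset.card_image_of_injOn hinj, hcard]
    omega

/-- The collection of complements of the subsets of `[2n]`
colored blue by `c₀` is restrictive. -/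
theorem statement12 (n : ℕ) :
    Restrictive n {T : Finset ℕ |
      ∃ S : Finset ℕ, S ⊆ ground (2*n) ∧ ¬ isRed n S ∧ T = ground (2*n) \ S} := by
  refine ⟨?_, ?_, ?_, ?_⟩
  · -- PairEnforcing
    rintro T ⟨S, hS, hred, rfl⟩ hlo hhi
    have hcS : S.card ≤ 2*n := by
      have := Finset.card_le_card hS; rwa [card_ground] at this
    rw [card_compl' hS] at hlo hhi
    have h1 : ¬ S.card < (n+1)/2 := by omega
    have h2 : ¬ S.card < n := by omega
    have h3 : ¬ S.card = n := by omega
    have h4 : S.card ≤ n + n/2 := by omega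
    rw [isRed, if_neg h1, if_neg h2, if_neg h3, if_pos h4, not_not] at hred
    exact hasPair_compl.mpr hred
  · -- MissForbidding
    rintro T ⟨S, hS, hred, rfl⟩ hlo hhi hmiss
    have hcS : S.card ≤ 2*n := by
      have := Finset.card_le_card hS; rwa [card_ground] at this
    rw [card_compl' hS] at hlo hhi
    have h1 : ¬ S.card < (n+1)/2 := by omega
    have h2 : S.card < n := by omega
    rw [isRed, if_neg h1, if_pos h2] at hred
    exact hred ((missesPair_compl hS).mp hmiss)
  · -- NotTooHigh
    rintro T ⟨S, hS, hred, rfl⟩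
    have hcS : S.card ≤ 2*n := by
      have := Finset.card_le_card hS; rwa [card_ground] at this
    rw [card_compl' hS]
    by_contra h
    have h1 : S.card < (n+1)/2 := by omega
    rw [isRed, if_pos h1] at hred
    exact hred trivial
  · -- FlipSusceptible
    rintro S₁ S₂ hsub₁ hsub₂ hc₁ hc₂ hcu hnp₁ hnp₂ ⟨⟨S₁', hS₁', hred₁, heq₁⟩, ⟨S₂', hS₂', hred₂, heq₂⟩⟩
    -- basic cardinalities
    have hn1 : 1 ≤ n := by
      by_contra h
      have hn0 : n = 0 := by omega
      subst hn0
      rw [Finset.card_eq_zero] at hc₁ hc₂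
      simp [hc₁, hc₂] at hcu
    have hcS₁' : S₁'.card ≤ 2*n := by
      have := Finset.card_le_card hS₁'; rwa [card_ground] at this
    have hcS₂' : S₂'.card ≤ 2*n := by
      have := Finset.card_le_card hS₂'; rwa [card_ground] at this
    have hC₁ : S₁'.card = n := by
      have := card_compl' hS₁'; rw [← heq₁, hc₁] at this; omega
    have hC₂ : S₂'.card = n := by
      have := card_compl' hS₂'; rw [← heq₂, hc₂] at this; omega
    -- extract parity info from ¬isRed
    have h1 : ¬ S₁'.card < (n+1)/2 := by omega
    have h2 : ¬ S₁'.card < n := by omega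
    rw [isRed, if_neg h1, if_neg h2, if_pos hC₁, Nat.odd_iff] at hred₁
    have h1' : ¬ S₂'.card < (n+1)/2 := by omega
    have h2' : ¬ S₂'.card < n := by omega
    rw [isRed, if_neg h1', if_neg h2', if_pos hC₂, Nat.odd_iff] at hred₂
    -- sums
    have hsum₁ : ∑ x ∈ S₁, x + ∑ x ∈ S₁', x = ∑ x ∈ ground (2*n), x := by
      rw [heq₁]; exact Finset.sum_sdiff hS₁'
    have hsum₂ : ∑ x ∈ S₂, x + ∑ x ∈ S₂', x = ∑ x ∈ ground (2*n), x := by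
      rw [heq₂]; exact Finset.sum_sdiff hS₂'
    have hpar : (∑ x ∈ S₁, x) % 2 = (∑ x ∈ S₂, x) % 2 := by omega
    -- the two single elements
    have hd₁ : (S₁ \ S₂).card = 1 := by
      have := Finset.card_sdiff_add_card_eq_card (Finset.inter_subset_left : S₁ ∩ S₂ ⊆ S₁)
      have h' : S₁ \ (S₁ ∩ S₂) = S₁ \ S₂ := by
        ext x; simp only [Finset.mem_sdiff, Finset.mem_inter]; tauto
      have hi : (S₁ ∩ S₂).card + (S₁ ∪ S₂).card = S₁.card + S₂.card :=
        Finset.card_inter_add_card_union S₁ S₂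
      rw [h'] at this
      omega
    have hd₂ : (S₂ \ S₁).card = 1 := by
      have := Finset.card_sdiff_add_card_eq_card (Finset.inter_subset_left : S₂ ∩ S₁ ⊆ S₂)
      have h' : S₂ \ (S₂ ∩ S₁) = S₂ \ S₁ := by
        ext x; simp only [Finset.mem_sdiff, Finset.mem_inter]; tauto
      have hi : (S₂ ∩ S₁).card + (S₂ ∪ S₁).card = S₂.card + S₁.card :=
        Finset.card_inter_add_card_union S₂ S₁
      rw [Finset.union_comm] at hi
      rw [h'] at this
      omega
    obtain ⟨a, ha⟩ := Finset.card_eq_one.mp hd₁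
    obtain ⟨b, hb⟩ := Finset.card_eq_one.mp hd₂
    have haS₁ : a ∈ S₁ ∧ a ∉ S₂ := by
      have : a ∈ S₁ \ S₂ := ha ▸ Finset.mem_singleton_self a
      exact Finset.mem_sdiff.mp this
    have hbS₂ : b ∈ S₂ ∧ b ∉ S₁ := by
      have : b ∈ S₂ \ S₁ := hb ▸ Finset.mem_singleton_self b
      exact Finset.mem_sdiff.mp this
    -- sum decomposition: parity of a and b
    have hsd₁ : ∑ x ∈ S₁ ∩ S₂, x + ∑ x ∈ S₁ \ S₂, x = ∑ x ∈ S₁, x :=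
      Finset.sum_inter_add_sum_sdiff S₁ S₂ _
    have hsd₂ : ∑ x ∈ S₂ ∩ S₁, x + ∑ x ∈ S₂ \ S₁, x = ∑ x ∈ S₂, x :=
      Finset.sum_inter_add_sum_sdiff S₂ S₁ _
    rw [ha, Finset.sum_singleton] at hsd₁
    rw [hb, Finset.sum_singleton] at hsd₂
    rw [Finset.inter_comm] at hsd₂
    have habpar : a % 2 = b % 2 := by omega
    -- b is the partner of a
    have hk : (a+1)/2 ∈ Finset.Icc 1 n := by
      rw [← one_per_pair hsub₁ hc₁ hnp₁]
      exact Finset.mem_image_of_mem _ haS₁.1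
    rw [← one_per_pair hsub₂ hc₂ hnp₂, Finset.mem_image] at hk
    obtain ⟨c, hcS₂, hcidx⟩ := hk
    have hca : c ≠ a := fun h => haS₁.2 (h ▸ hcS₂)
    have hcS₁ : c ∉ S₁ := by
      intro hcS₁
      exact hnp₁ (pair_of_same_idx hsub₁ hcS₁ haS₁.1 hca hcidx)
    have hcb : c = b := by
      have : c ∈ S₂ \ S₁ := Finset.mem_sdiff.mpr ⟨hcS₂, hcS₁⟩
      rw [hb, Finset.mem_singleton] at this
      exact this
    subst hcb
    have ha1 := mem_ground'.mp (hsub₁ haS₁.1)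
    have hb1 := mem_ground'.mp (hsub₂ hbS₂.1)
    omega
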